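/- Consider the protocol on states {L₁, L₂, N} with rules L₁L₂ → L₁N, L₂L₁ → NL₁, L₁N → NL₂, NL₁ → L₂N, L₂N → NL₁, NL₂ → L₁N, L₁L₁ → L₂L₂, L₂L₂ → L₁L₁, NN → NN. Call an agent a leader if its state is L₁ or L₂. Then (a) every rule either preserves the number of leaders or decreases it by one, and the number of leaders decreases only when two leaders interact; and (b) from any configuration of size ≥ 3 with at least two leaders, some configuration with strictly fewer leaders (but at least one) is reachable. -/
import Mathlib


inductive LS : Type
  | L1 : LS
  | L2 : LS
  | N : LS
deriving DecidableEq

/-- Rules: L₁L₂→L₁N, L₂L₁→NL₁, L₁N→NL₂, NL₁→L₂N, L₂N→NL₁, NL₂→L₁N,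
L₁L₁→L₂L₂, L₂L₂→L₁L₁, NN→NN. -/
def δL : LS → LS → LS × LS
  | .L1, .L2 => (.L1, .N)
  | .L2, .L1 => (.N, .L1)
  | .L1, .N => (.N, .L2)
  | .N, .L1 => (.L2, .N)
  | .L2, .N => (.N, .L1)
  | .N, .L2 => (.L1, .N)
  | .L1, .L1 => (.L2, .L2)
  | .L2, .L2 => (.L1, .L1)
  | .N, .N => (.N, .N)

def isLeader : LS → Bool
  | .N => false
  | _ => true

/-- Number of leaders in a configuration. -/
def leaders (c : Multiset LS) : ℕ := c.count LS.L1 + c.count LS.L2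

/-- Leader count of a pair. -/
def lc (p : LS × LS) : ℕ :=
  (if isLeader p.1 then 1 else 0) + (if isLeader p.2 then 1 else 0)

def Step {Q : Type*} (δ : Q → Q → Q × Q) (c c' : Multiset Q) : Prop :=
  ∃ q₁ q₂ rest, c = q₁ ::ₘ q₂ ::ₘ rest ∧ c' = (δ q₁ q₂).1 ::ₘ (δ q₁ q₂).2 ::ₘ rest

lemma leaders_cons (a : LS) (s : Multiset LS) :
    leaders (a ::ₘ s) = (if isLeader a then 1 else 0) + leaders s := by
  cases a <;> simp [leaders, isLeader, Multiset.count_cons] <;> omega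

lemma step_of_eq {c : Multiset LS} (q₁ q₂ : LS) (r : Multiset LS)
    (h : c = q₁ ::ₘ q₂ ::ₘ r) : Step δL c ((δL q₁ q₂).1 ::ₘ (δL q₁ q₂).2 ::ₘ r) :=
  ⟨q₁, q₂, r, h, rfl⟩

/-- (a) Every rule preserves the number of leaders or decreases it by one, and it
decreases only when two leaders interact; (b) from any configuration of size ≥ 3
with at least two leaders, a configuration with strictly fewer leaders (but at
least one) is reachable. -/
theorem stmt7 :
    (∀ q₁ q₂ : LS,
      lc (δL q₁ q₂) = lc (q₁, q₂) ∨
      (lc (δL q₁ q₂) + 1 = lc (q₁, q₂) ∧ isLeader q₁ = true ∧ isLeader q₂ = true)) ∧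
    (∀ c : Multiset LS, 3 ≤ Multiset.card c → 2 ≤ leaders c →
      ∃ c', Relation.TransGen (Step δL) c c' ∧ leaders c' < leaders c ∧ 1 ≤ leaders c') := by
  constructor
  · intro q₁ q₂; cases q₁ <;> cases q₂ <;> simp [δL, lc, isLeader]
  · intro c hcard hl
    by_cases h1 : LS.L1 ∈ c
    · by_cases h2 : LS.L2 ∈ c
      · -- mixed pair: one step
        obtain ⟨c₁, rfl⟩ := Multiset.exists_cons_of_mem h1
        have h2' : LS.L2 ∈ c₁ := by
          rcases Multiset.mem_cons.mp h2 with h | h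
          · exact absurd h (by decide)
          · exact h
        obtain ⟨r, rfl⟩ := Multiset.exists_cons_of_mem h2'
        refine ⟨LS.L1 ::ₘ LS.N ::ₘ r, Relation.TransGen.single (step_of_eq LS.L1 LS.L2 r rfl), ?_⟩
        simp [leaders_cons, isLeader]
      · -- only L1 leaders; count L1 ≥ 2
        have hc2 : Multiset.count LS.L2 c = 0 := Multiset.count_eq_zero.mpr h2
        have hc1 : 2 ≤ Multiset.count LS.L1 c := by
          simp [leaders, hc2] at hl; omega
        obtain ⟨c₁, rfl⟩ := Multiset.exists_cons_of_mem h1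
        have h1' : LS.L1 ∈ c₁ := by
          have := hc1; rw [Multiset.count_cons_self] at this
          exact Multiset.count_pos.mp (by omega)
        obtain ⟨c₂, rfl⟩ := Multiset.exists_cons_of_mem h1'
        have hc₂ : c₂ ≠ 0 := by
          intro h; subst h; simp at hcard
        obtain ⟨x, hx⟩ := Multiset.exists_mem_of_ne_zero hc₂
        obtain ⟨r, rfl⟩ := Multiset.exists_cons_of_mem hx
        cases x with
        | L2 => exact absurd (by simp : LS.L2 ∈ LS.L1 ::ₘ LS.L1 ::ₘ LS.L2 ::ₘ r) h2
        | L1 =>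
            -- L1 L1 L1 : step L1 L1 → L2 L2, then L1 L2 → L1 N
            refine ⟨LS.L1 ::ₘ LS.N ::ₘ LS.L2 ::ₘ r,
              Relation.TransGen.head (step_of_eq LS.L1 LS.L1 (LS.L1 ::ₘ r) rfl)
                (Relation.TransGen.single (step_of_eq LS.L1 LS.L2 (LS.L2 ::ₘ r) ?_)), ?_⟩
            · show (LS.L2 ::ₘ LS.L2 ::ₘ LS.L1 ::ₘ r) = _
              rw [Multiset.cons_swap LS.L2 LS.L1, Multiset.cons_swap LS.L2 LS.L1]
            · simp [leaders_cons, isLeader]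
        | N =>
            -- L1 L1 N : step L1 N → N L2 (on second L1 and the N), then L1 L2 → L1 N
            refine ⟨LS.L1 ::ₘ LS.N ::ₘ LS.N ::ₘ r,
              Relation.TransGen.head (step_of_eq LS.L1 LS.N (LS.L1 ::ₘ r)
                (by rw [Multiset.cons_swap LS.L1 LS.N]))
                (Relation.TransGen.single (step_of_eq LS.L1 LS.L2 (LS.N ::ₘ r) ?_)), ?_⟩
            · show (LS.N ::ₘ LS.L2 ::ₘ LS.L1 ::ₘ r) = _
              rw [Multiset.cons_swap LS.N LS.L2]
              rw [Multiset.cons_swap LS.N LS.L1]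
              rw [Multiset.cons_swap LS.L2 LS.L1]
            · simp [leaders_cons, isLeader]
    · by_cases h2 : LS.L2 ∈ c
      · -- only L2 leaders; count L2 ≥ 2
        have hc1 : Multiset.count LS.L1 c = 0 := Multiset.count_eq_zero.mpr h1
        have hc2 : 2 ≤ Multiset.count LS.L2 c := by
          simp [leaders, hc1] at hl; omega
        obtain ⟨c₁, rfl⟩ := Multiset.exists_cons_of_mem h2
        have h2' : LS.L2 ∈ c₁ := by
          have := hc2; rw [Multiset.count_cons_self] at this
          exact Multiset.count_pos.mp (by omega)
        obtain ⟨c₂, rfl⟩ := Multiset.exists_cons_of_mem h2'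
        have hc₂ : c₂ ≠ 0 := by
          intro h; subst h; simp at hcard
        obtain ⟨x, hx⟩ := Multiset.exists_mem_of_ne_zero hc₂
        obtain ⟨r, rfl⟩ := Multiset.exists_cons_of_mem hx
        cases x with
        | L1 => exact absurd (by simp : LS.L1 ∈ LS.L2 ::ₘ LS.L2 ::ₘ LS.L1 ::ₘ r) h1
        | L2 =>
            -- L2 L2 L2 : step L2 L2 → L1 L1, then L1 L2 → L1 N
            refine ⟨LS.L1 ::ₘ LS.N ::ₘ LS.L1 ::ₘ r,
              Relation.TransGen.head (step_of_eq LS.L2 LS.L2 (LS.L2 ::ₘ r) rfl)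
                (Relation.TransGen.single (step_of_eq LS.L1 LS.L2 (LS.L1 ::ₘ r) ?_)), ?_⟩
            · show (LS.L1 ::ₘ LS.L1 ::ₘ LS.L2 ::ₘ r) = _
              rw [Multiset.cons_swap LS.L1 LS.L2]
            · simp [leaders_cons, isLeader]
        | N =>
            -- L2 L2 N : step L2 N → N L1 (on second L2 and the N), then L1 L2 → L1 N
            refine ⟨LS.L1 ::ₘ LS.N ::ₘ LS.N ::ₘ r,
              Relation.TransGen.head (step_of_eq LS.L2 LS.N (LS.L2 ::ₘ r)
                (by rw [Multiset.cons_swap LS.L2 LS.N]))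
                (Relation.TransGen.single (step_of_eq LS.L1 LS.L2 (LS.N ::ₘ r) ?_)), ?_⟩
            · show (LS.N ::ₘ LS.L1 ::ₘ LS.L2 ::ₘ r) = _
              rw [Multiset.cons_swap LS.N LS.L1]
              rw [Multiset.cons_swap LS.N LS.L2]
            · simp [leaders_cons, isLeader]
      · exfalso
        have : leaders c = 0 := by
          simp [leaders, Multiset.count_eq_zero.mpr h1, Multiset.count_eq_zero.mpr h2]
        omega
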